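/- arXiv:1708.04070 — 2 statements merged into one kernel-verified Lean document; each statement's English description precedes it below -/
import Mathlib

section
/- If an agent i's knowledge base at time t contains K_i^t φ, then for every time-stamp t' in the trace with t ≤ t' ≤ t + ω, the agent knows φ at time t', i.e., the judgement EKB_i ⊢ (K_i^{t'} φ, ω) holds. (ω-knowledge monotonicity: knowledge persists for the duration of the memory window.) -/
inductive Fm where
  | atom : Nat → Fm
  | bot : Fm
  | imp : Fm → Fm → Fm
  | K : Nat → Nat → Fm → Fm
  | B : Nat → Nat → Fm → Fm

def Fm.neg (φ : Fm) : Fm := Fm.imp φ Fm.bot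

/-- Timed deduction system: Premise, A1 (tautologies), S5 rules A2–A5,
KD45 rules K, D, B4, B5, bridge rules L1, L2, and knowledge recall KR1. -/
inductive Deriv (Taut : Set Fm) (Γ : Set Fm) : Fm → Nat → Prop where
  | premise {φ w} : φ ∈ Γ → Deriv Taut Γ φ w
  | a1 {φ w} : φ ∈ Taut → Deriv Taut Γ φ w
  | a2 {i t φ ψ w} : Deriv Taut Γ (Fm.K i t φ) w →
      Deriv Taut Γ (Fm.K i t (Fm.imp φ ψ)) w → Deriv Taut Γ (Fm.K i t ψ) w
  | a3 {i t φ w} : Deriv Taut Γ (Fm.K i t φ) w → Deriv Taut Γ φ w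
  | a4 {i t φ w} : Deriv Taut Γ (Fm.K i t φ) w →
      Deriv Taut Γ (Fm.K i t (Fm.K i t φ)) w
  | a5 {i t φ w} : Deriv Taut Γ (Fm.neg (Fm.K i t φ)) w →
      Deriv Taut Γ (Fm.K i t (Fm.neg (Fm.K i t φ))) w
  | kB {i t φ ψ w} : Deriv Taut Γ (Fm.B i t φ) w →
      Deriv Taut Γ (Fm.B i t (Fm.imp φ ψ)) w → Deriv Taut Γ (Fm.B i t ψ) w
  | dB {i t w} : Deriv Taut Γ (Fm.neg (Fm.B i t Fm.bot)) w
  | b4 {i t φ w} : Deriv Taut Γ (Fm.B i t φ) w →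
      Deriv Taut Γ (Fm.B i t (Fm.B i t φ)) w
  | b5 {i t φ w} : Deriv Taut Γ (Fm.neg (Fm.B i t φ)) w →
      Deriv Taut Γ (Fm.B i t (Fm.neg (Fm.B i t φ))) w
  | l1 {i t φ w} : Deriv Taut Γ (Fm.K i t φ) w → Deriv Taut Γ (Fm.B i t φ) w
  | l2 {i t φ w} : Deriv Taut Γ (Fm.B i t φ) w →
      Deriv Taut Γ (Fm.K i t (Fm.B i t φ)) w
  | kr1 {i t t' φ w} : t < t' → t' - t ≤ w →
      Deriv Taut Γ (Fm.K i t φ) (w - (t' - t)) → Deriv Taut Γ (Fm.K i t' φ) w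

/-- ω-knowledge monotonicity: if `K_i^t φ` is in the agent's knowledge base,
then for every time-stamp `t'` of the trace with `t ≤ t' ≤ t + ω`,
`K_i^{t'} φ` is derivable with window `ω`. -/
theorem omega_knowledge_monotonicity (Taut Γ : Set Fm) (Tσ : Finset Nat)
    (i t ω : Nat) (φ : Fm) (h : Fm.K i t φ ∈ Γ) :
    ∀ t' ∈ Tσ, t ≤ t' → t' ≤ t + ω → Deriv Taut Γ (Fm.K i t' φ) ω := by
  intro t' _ hle hub
  rcases eq_or_lt_of_le hle with rfl | hlt
  · exact Deriv.premise h
  · exact Deriv.kr1 hlt (by omega) (Deriv.premise h)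
end

section
/- With ω = 0 (zero memory window), an agent cannot propagate knowledge across distinct time instants: if K_i^t φ is derivable only via the premise K_i^{t₀} φ for t₀ < t using rule KR1, then the derivation judgment Γ ⊢ (K_i^t φ, 0) fails whenever K_i^t φ ∉ Γ and the only applicable rule to introduce K_i^t φ is KR1 from an earlier time. Formally: in a deduction system consisting solely of the rules Premise and KR1, if Γ contains K_i^{t₀} φ with t₀ < t and does not contain K_i^{t} φ, then Γ ⊬ (K_i^t φ, w) for any w < t − t₀. -/
/-- The timed deduction system restricted to the rules Premise and KR1. -/
inductive Deriv2 (Γ : Set Fm) : Fm → Nat → Prop where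
  | premise {φ w} : φ ∈ Γ → Deriv2 Γ φ w
  | kr1 {i t t' φ w} : t < t' → t' - t ≤ w →
      Deriv2 Γ (Fm.K i t φ) (w - (t' - t)) → Deriv2 Γ (Fm.K i t' φ) w

theorem aux (Γ : Set Fm) (i t₀ : Nat) (φ : Fm)
    (honly : ∀ s, Fm.K i s φ ∈ Γ → s ≤ t₀) :
    ∀ ψ w, Deriv2 Γ ψ w → ∀ t, ψ = Fm.K i t φ → t₀ < t → w < t - t₀ → False := by
  intro ψ w h
  induction h with
  | premise hmem =>
    intro t heq hlt hw
    subst heq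
    exact absurd (honly _ hmem) (by omega)
  | kr1 hst hle _ ih =>
    rename_i i' s t' ψ' w'
    intro t heq hlt hw
    injection heq with h1 h2 h3
    subst h1; subst h2
    exact ih i' (by rw [h3]) (by omega) (by omega)

/-- With a window smaller than `t - t₀`, knowledge available only at earlier
times (at or before `t₀`) cannot be propagated to time `t`. -/
theorem no_propagation_beyond_window (Γ : Set Fm) (i t₀ t : Nat) (φ : Fm)
    (hmem : Fm.K i t₀ φ ∈ Γ) (hlt : t₀ < t)
    (hnot : Fm.K i t φ ∉ Γ)
    (honly : ∀ s, Fm.K i s φ ∈ Γ → s ≤ t₀) :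
    ∀ w, w < t - t₀ → ¬ Deriv2 Γ (Fm.K i t φ) w := by
  intro w hw hd
  exact aux Γ i t₀ φ honly _ _ hd t rfl hlt hw
end
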